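/- Let 𝒜 be a locally finite L-structure and ℬ an L'-structure every finitely generated substructure of which is rigid, and suppose 𝒜 is a semi-retract of ℬ via (g, f). Let A be a finite substructure of 𝒜 and let A' = ⟨g(A)⟩_ℬ be the substructure of ℬ generated by g(A). If d ≥ 1 is an integer such that ℬ → (B₀)^{A'}_{r,d} for every finitely generated substructure B₀ of ℬ and every integer r ≥ 2, then 𝒜 → (B)^A_{r,d} for every finite substructure B of 𝒜 and every integer r ≥ 2; that is, if A' has finite Ramsey degree d in ℬ then A has finite Ramsey degree at most d in 𝒜. -/

import Mathlib

/-!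
Enumerate `A` and `B` by tuples `a` and `b`. In `ℬ`, colour a copy `⟨u⟩` of `⟨g ∘ a⟩`, where
`u` has the quantifier-free type of `g ∘ a`, by the colour of `⟨f ∘ u⟩`; rigidity of `⟨u⟩` makes
`u` unique, so this is well defined. Take a copy `⟨z⟩` of `⟨g ∘ b⟩` on which few colours occur.
Then `⟨f ∘ z⟩` is a copy of `B`, and since `range b = B` is closed, its underlying set is
`range (f ∘ z)`. So each copy of `A` inside it is `⟨f ∘ y⟩` for a subtuple `y` of `z` of the type
of `g ∘ a`, and its colour is the colour of the copy `⟨y⟩ ≤ ⟨z⟩`.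
-/

open FirstOrder FirstOrder.Language

/-- Two same-length tuples have the same quantifier-free type over ∅. -/
def SameQfType (L : FirstOrder.Language) (M : Type*) [L.Structure M] {n : ℕ}
    (x y : Fin n → M) : Prop :=
  ∀ φ : L.Formula (Fin n), φ.IsQF → (φ.Realize x ↔ φ.Realize y)

/-- A qftp-respecting injection between structures in possibly different languages. -/
def QftpRespecting (L L' : FirstOrder.Language) (M N : Type*) [L.Structure M] [L'.Structure N]
    (h : M → N) : Prop :=
  Function.Injective h ∧
    ∀ (n : ℕ) (x y : Fin n → M), SameQfType L M x y → SameQfType L' N (h ∘ x) (h ∘ y)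

/-- `(g, f)` is a semi-retraction between `M` and `N`: both maps are qftp-respecting
injections and `f ∘ g` is qftp-preserving (equivalently, an `L`-embedding of `M` into `M`). -/
def IsSemiRetraction (L L' : FirstOrder.Language) (M N : Type*)
    [L.Structure M] [L'.Structure N] (g : M → N) (f : N → M) : Prop :=
  QftpRespecting L L' M N g ∧ QftpRespecting L' L N M f ∧
    ∀ (n : ℕ) (x : Fin n → M), SameQfType L M x (f ∘ g ∘ x)

/-- `M` is locally finite: every finitely generated substructure is finite. -/
def StructLocallyFinite (L : FirstOrder.Language) (M : Type*) [L.Structure M] : Prop :=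
  ∀ S : L.Substructure M, S.FG → (S : Set M).Finite

/-- `M → (B)^A_{r,d}` for substructures. -/
def ArrowSub (L : FirstOrder.Language) (M : Type*) [L.Structure M]
    (A B : L.Substructure M) (r d : ℕ) : Prop :=
  ∀ c : L.Substructure M → Fin r, ∃ B' : L.Substructure M,
    Nonempty (B' ≃[L] B) ∧
      (c '' {A' : L.Substructure M | A' ≤ B' ∧ Nonempty (A' ≃[L] A)}).ncard ≤ d

/-- `M →ᵉ (B)^A_{r,d}` for embeddings. -/
def ArrowEmb (L : FirstOrder.Language) (M : Type*) [L.Structure M]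
    (A B : L.Substructure M) (r d : ℕ) : Prop :=
  ∀ c : (A ↪[L] M) → Fin r, ∃ h : B ↪[L] M,
    (c '' {j : A ↪[L] M | ∃ e : A ↪[L] B, j = h.comp e}).ncard ≤ d

/-- A structure is rigid if its only automorphism is the identity. -/
def IsRigidStructure (L : FirstOrder.Language) (M : Type*) [L.Structure M] : Prop :=
  ∀ σ : M ≃[L] M, ∀ x : M, σ x = x

open Set Substructure Structure

section QfType

variable {L : Language} {M : Type*} [L.Structure M] {n : ℕ}

theorem FirstOrder.Language.BoundedFormula.IsQF.realize_formula_embedding {N F α : Type*}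
    [L.Structure N] [FunLike F M N] [EmbeddingLike F M N] [L.StrongHomClass F M N]
    {φ : L.Formula α} (hφ : φ.IsQF) (j : F) (v : α → M) : φ.Realize (j ∘ v) ↔ φ.Realize v := by
  simpa only [Formula.Realize, Unique.eq_default (j ∘ default)] using
    hφ.realize_embedding j (v := v) (xs := default)

namespace SameQfType

variable {x y z : Fin n → M}

theorem symm (h : SameQfType L M x y) : SameQfType L M y x :=
  fun φ hφ => (h φ hφ).symm

theorem trans (h : SameQfType L M x y) (h' : SameQfType L M y z) : SameQfType L M x z :=
  fun φ hφ => (h φ hφ).trans (h' φ hφ)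

theorem comp_right {m : ℕ} (h : SameQfType L M x y) (k : Fin m → Fin n) :
    SameQfType L M (x ∘ k) (y ∘ k) := fun φ hφ => by
  simpa only [Formula.realize_relabel] using h (φ.relabel k) (hφ.relabel _)

theorem realize_term_eq (h : SameQfType L M x y) {t t' : L.Term (Fin n)}
    (ht : t.realize x = t'.realize x) : t.realize y = t'.realize y := by
  have hφ : (t.equal t').IsQF := (BoundedFormula.IsAtomic.equal _ _).isQF
  simpa using (h _ hφ).1 (by simpa using ht)

theorem relMap_iff (h : SameQfType L M x y) {l : ℕ} (R : L.Relations l)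
    (ts : Fin l → L.Term (Fin n)) :
    RelMap R (fun i => (ts i).realize x) ↔ RelMap R (fun i => (ts i).realize y) := by
  have hφ : (R.formula ts).IsQF := (BoundedFormula.IsAtomic.rel _ _).isQF
  simpa using h _ hφ

end SameQfType

theorem mem_closure_range_iff_exists_term {x : Fin n → M} {a : M} :
    a ∈ closure L (range x) ↔ ∃ t : L.Term (Fin n), t.realize x = a := by
  rw [mem_closure_iff_exists_term]
  constructor
  · rintro ⟨t, rfl⟩
    refine ⟨t.relabel (rangeSplitting x), ?_⟩
    rw [Term.realize_relabel]
    congr 1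
    exact funext fun i => apply_rangeSplitting x i
  · rintro ⟨t, rfl⟩
    exact ⟨t.relabel fun i => ⟨x i, mem_range_self i⟩, by rw [Term.realize_relabel]; rfl⟩

noncomputable def closureMap {x : Fin n → M} (y : Fin n → M) (a : closure L (range x)) :
    closure L (range y) :=
  ⟨(mem_closure_range_iff_exists_term.1 a.2).choose.realize y,
    mem_closure_range_iff_exists_term.2 ⟨_, rfl⟩⟩

namespace SameQfType

variable {x y : Fin n → M}

theorem coe_closureMap (h : SameQfType L M x y) {a : closure L (range x)} {t : L.Term (Fin n)}
    (ht : t.realize x = a) : (closureMap y a : M) = t.realize y :=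
  h.realize_term_eq ((mem_closure_range_iff_exists_term.1 a.2).choose_spec.trans ht.symm)

theorem closureMap_closureMap (h : SameQfType L M x y) (a : closure L (range x)) :
    closureMap x (closureMap y a) = a := by
  obtain ⟨t, ht⟩ := mem_closure_range_iff_exists_term.1 a.2
  exact Subtype.ext ((h.symm.coe_closureMap (h.coe_closureMap ht).symm).trans ht)

noncomputable def closureEquiv (h : SameQfType L M x y) :
    closure L (range x) ≃[L] closure L (range y) where
  toFun := closureMap y
  invFun := closureMap x
  left_inv := h.closureMap_closureMap
  right_inv := h.symm.closureMap_closureMap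
  map_fun' {l} F v := by
    choose t ht using fun i => mem_closure_range_iff_exists_term.1 (v i).2
    refine Subtype.ext ((h.coe_closureMap (t := Term.func F t) ?_).trans ?_)
    · show funMap F (fun i => (t i).realize x) = funMap F (fun i => (v i : M))
      simp only [ht]
    · show funMap F (fun i => (t i).realize y) = funMap F (fun i => (closureMap y (v i) : M))
      simp only [fun i => h.coe_closureMap (ht i)]
  map_rel' {l} R v := by
    choose t ht using fun i => mem_closure_range_iff_exists_term.1 (v i).2
    show RelMap R (fun i => (closureMap y (v i) : M)) ↔ RelMap R (fun i => (v i : M))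
    simp only [fun i => h.coe_closureMap (ht i), ← ht]
    exact (h.relMap_iff R t).symm

theorem coe_closureEquiv_apply (h : SameQfType L M x y) (i : Fin n) :
    (h.closureEquiv ⟨x i, subset_closure (mem_range_self i)⟩ : M) = y i :=
  h.coe_closureMap (t := Term.var i) rfl

end SameQfType

end QfType

section Closure

variable {L : Language} {M : Type*} [L.Structure M] {n : ℕ}

theorem IsRigidStructure.coe_apply_eq_of_eq {S T : L.Substructure M}
    (hS : IsRigidStructure L S) (hST : S = T) (e : S ≃[L] T) (a : S) : (e a : M) = a := by
  subst hST
  exact congrArg Subtype.val (hS e a)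

namespace SameQfType

variable {x y : Fin n → M}

theorem eq_of_closure_eq (h : SameQfType L M x y)
    (hc : closure L (range x) = closure L (range y))
    (hr : IsRigidStructure L (closure L (range y))) : x = y :=
  funext fun i => (h.symm.coe_closureEquiv_apply i).symm.trans
    (hr.coe_apply_eq_of_eq hc.symm h.symm.closureEquiv _)

theorem coe_closure_subset_range (h : SameQfType L M x y)
    (hx : (closure L (range x) : Set M) ⊆ range x) :
    (closure L (range y) : Set M) ⊆ range y := by
  intro b hb
  obtain ⟨i, hi⟩ := hx (h.closureEquiv.symm ⟨b, hb⟩).2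
  have hi' : h.closureEquiv.symm ⟨b, hb⟩ = ⟨x i, subset_closure (mem_range_self i)⟩ :=
    Subtype.ext hi.symm
  refine ⟨i, ?_⟩
  rw [← h.coe_closureEquiv_apply i, ← hi', h.closureEquiv.apply_symm_apply]

end SameQfType

theorem closure_range_eq_top_of_closure_range_subtype_comp {S : L.Substructure M}
    {x : Fin n → S} (hx : closure L (range (S.subtype ∘ x)) = S) : closure L (range x) = ⊤ := by
  apply map_injective_of_injective (f := S.subtype.toHom) S.subtype.injective
  rw [map_closure, ← range_comp, ← Hom.range_eq_map, range_subtype]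
  exact hx

theorem exists_sameQfType_of_equiv_closure_range {T : L.Substructure M} {x : Fin n → M}
    (ρ : T ≃[L] closure L (range x)) :
    ∃ y : Fin n → M, closure L (range y) = T ∧ SameQfType L M x y := by
  let x' : Fin n → closure L (range x) := fun i => ⟨x i, subset_closure (mem_range_self i)⟩
  have hx' : closure L (range x') = ⊤ :=
    closure_range_eq_top_of_closure_range_subtype_comp rfl
  refine ⟨T.subtype ∘ ρ.symm ∘ x', ?_, fun φ hφ => ?_⟩
  · rw [range_comp, range_comp, ← Embedding.coe_toHom, ← Equiv.coe_toHom, closure_image,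
      closure_image, hx', ← Hom.range_eq_map, Hom.range_eq_top.2 ρ.symm.toEquiv.surjective,
      ← Hom.range_eq_map, range_subtype]
  · change φ.Realize ((closure L (range x)).subtype ∘ x') ↔ _
    rw [hφ.realize_formula_embedding, hφ.realize_formula_embedding,
      hφ.realize_formula_embedding]

end Closure

section Transfer

variable {L L' : Language} {M N : Type*} [L.Structure M] [L'.Structure N] {m n : ℕ}

namespace IsSemiRetraction

variable {g : M → N} {f : N → M}

theorem sameQfType_comp (hsr : IsSemiRetraction L L' M N g f) {x : Fin n → M}
    {u : Fin n → N} (h : SameQfType L' N (g ∘ x) u) : SameQfType L M x (f ∘ u) :=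
  (hsr.2.2 n x).trans (hsr.2.1.2 n _ _ h)

theorem exists_sameQfType_of_le_closure (hsr : IsSemiRetraction L L' M N g f)
    {x : Fin m → M} {b : Fin n → M} (hb : (closure L (range b) : Set M) ⊆ range b)
    {z : Fin n → N} (hz : SameQfType L' N (g ∘ b) z) {A : L.Substructure M}
    (hA : A ≤ closure L (range (f ∘ z))) (ρ : A ≃[L] closure L (range x)) :
    ∃ y : Fin m → N, range y ⊆ range z ∧ SameQfType L' N (g ∘ x) y ∧
      closure L (range (f ∘ y)) = A := by
  obtain ⟨a, rfl, hxa⟩ := exists_sameQfType_of_equiv_closure_range ρ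
  have hbz := hsr.sameQfType_comp hz
  choose k hk using fun j =>
    hbz.coe_closure_subset_range hb (hA (subset_closure (mem_range_self j)))
  obtain rfl : a = f ∘ z ∘ k := funext fun j => (hk j).symm
  have hxb : SameQfType L M x (b ∘ k) := hxa.trans (hbz.comp_right k).symm
  exact ⟨z ∘ k, range_comp_subset_range k z, (hsr.1.2 m _ _ hxb).trans (hz.comp_right k), rfl⟩

end IsSemiRetraction

open Classical in
/-- Under rigidity the tuple `u` is determined by `S`, see `pullbackColoring_closure_range`. -/
noncomputable def pullbackColoring {κ : Type*} (f : N → M) (x : Fin n → N)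
    (c : L.Substructure M → κ) (S : L'.Substructure N) : κ :=
  if h : ∃ u : Fin n → N, closure L' (range u) = S ∧ SameQfType L' N x u then
    c (closure L (range (f ∘ h.choose)))
  else c ⊥

theorem pullbackColoring_closure_range {κ : Type*} (f : N → M) (c : L.Substructure M → κ)
    {x y : Fin n → N} (h : SameQfType L' N x y)
    (hr : IsRigidStructure L' (closure L' (range y))) :
    pullbackColoring f x c (closure L' (range y)) = c (closure L (range (f ∘ y))) := by
  have hex : ∃ u : Fin n → N, closure L' (range u) = closure L' (range y) ∧
      SameQfType L' N x u := ⟨y, rfl, h⟩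
  obtain ⟨hcl, hu⟩ := hex.choose_spec
  rw [pullbackColoring, dif_pos hex, (hu.symm.trans h).eq_of_closure_eq hcl hr]

end Transfer

theorem semiRetraction_transfers_Ramsey_degree_of_rigid_general
    {L L' : FirstOrder.Language} {M N : Type*} [L.Structure M] [L'.Structure N]
    (g : M → N) (f : N → M)
    (hrigid : ∀ S : L'.Substructure N, S.FG → IsRigidStructure L' S)
    (hsr : IsSemiRetraction L L' M N g f)
    (A : L.Substructure M) (hAfin : (A : Set M).Finite)
    (d : ℕ)
    (hdeg : ∀ B₀ : L'.Substructure N, B₀.FG → ∀ r : ℕ, 2 ≤ r →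
      ArrowSub L' N (Substructure.closure L' (g '' (A : Set M))) B₀ r d) :
    ∀ B : L.Substructure M, (B : Set M).Finite → ∀ r : ℕ, 2 ≤ r →
      ArrowSub L M A B r d := by
  intro B hBfin r hr c
  obtain ⟨m, a, -, hA⟩ := hAfin.fin_param
  obtain ⟨p, b, -, hB⟩ := hBfin.fin_param
  obtain rfl : closure L (range a) = A := by rw [hA, closure_eq]
  obtain rfl : closure L (range b) = B := by rw [hB, closure_eq]
  rw [← hA, ← range_comp] at hdeg
  obtain ⟨_, ⟨ε⟩, hcard⟩ :=
    hdeg _ (fg_closure (finite_range (g ∘ b))) r hr (pullbackColoring f (g ∘ a) c)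
  obtain ⟨z, rfl, hz⟩ := exists_sameQfType_of_equiv_closure_range ε
  refine ⟨closure L (range (f ∘ z)), ⟨(hsr.sameQfType_comp hz).closureEquiv.symm⟩,
    (ncard_le_ncard ?_ (toFinite _)).trans hcard⟩
  rintro _ ⟨A₂, ⟨hA₂, ⟨ρ⟩⟩, rfl⟩
  obtain ⟨y, hyz, hy, rfl⟩ := hsr.exists_sameQfType_of_le_closure hB.symm.subset hz hA₂ ρ
  exact ⟨closure L' (range y), ⟨closure_mono hyz, ⟨hy.closureEquiv.symm⟩⟩,
    pullbackColoring_closure_range f c hy (hrigid _ (fg_closure (finite_range y)))⟩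

/-- Corollary 5.3 / `cor_fmla_free_degrees`: if `𝒜` is a locally finite
semi-retract of `ℬ` via `(g, f)`, every finitely generated substructure of `ℬ` is rigid, and
`A' = ⟨g(A)⟩_ℬ` has Ramsey degree at most `d` in `ℬ`, then the finite substructure `A` has
Ramsey degree at most `d` in `𝒜`. -/
theorem semiRetraction_transfers_Ramsey_degree_of_rigid
    {L L' : FirstOrder.Language} {M N : Type*} [L.Structure M] [L'.Structure N]
    (g : M → N) (f : N → M)
    (hlf : StructLocallyFinite L M)
    (hrigid : ∀ S : L'.Substructure N, S.FG → IsRigidStructure L' S)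
    (hsr : IsSemiRetraction L L' M N g f)
    (A : L.Substructure M) (hAfin : (A : Set M).Finite)
    (d : ℕ) (hd : 1 ≤ d)
    (hdeg : ∀ B₀ : L'.Substructure N, B₀.FG → ∀ r : ℕ, 2 ≤ r →
      ArrowSub L' N (Substructure.closure L' (g '' (A : Set M))) B₀ r d) :
    ∀ B : L.Substructure M, (B : Set M).Finite → ∀ r : ℕ, 2 ≤ r →
      ArrowSub L M A B r d :=
  semiRetraction_transfers_Ramsey_degree_of_rigid_general g f hrigid hsr A hAfin d hdeg
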